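/- The coefficient of q^N in Σ_{n≥0} (−aq;q)_n b^n q^{n(n+1)/2}/(bq;q)_n, viewed as a polynomial in a and b, equals Σ over pairs (π₁,π₂) with π₁ a partition into distinct parts each ≤ n, π₂ a partition into exactly n distinct parts, |π₁|+|π₂|=N, of a^{n(π₁)} b^{π₂'}, where n(π₁) is the number of parts of π₁ and π₂' the largest part of π₂; i.e. Σ_{n≥0} (−aq;q)_n b^n q^{n(n+1)/2}/(bq;q)_n = Σ_{n≥0} Σ_{(π₁,π₂)∈D_{≤n}×D_n} a^{n(π₁)} b^{π₂'} q^{|π₁|+|π₂|}. -/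

import Mathlib

open Finset

/-- The product (coefficient-wise convergence) topology on formal power series. -/
noncomputable instance : TopologicalSpace (MvPowerSeries (Fin 3) ℚ) :=
  inferInstanceAs (TopologicalSpace ((Fin 3 →₀ ℕ) → ℚ))

/-- The variable `a`. -/
noncomputable def a : MvPowerSeries (Fin 3) ℚ := MvPowerSeries.X 0

/-- The variable `b`. -/
noncomputable def b : MvPowerSeries (Fin 3) ℚ := MvPowerSeries.X 1

/-- The variable `q`. -/
noncomputable def q : MvPowerSeries (Fin 3) ℚ := MvPowerSeries.X 2

/-- The finite q-Pochhammer symbol `(u; v)_n = ∏_{k=0}^{n-1} (1 - u v^k)`. -/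
noncomputable def poch (u v : MvPowerSeries (Fin 3) ℚ) (n : ℕ) : MvPowerSeries (Fin 3) ℚ :=
  ∏ k ∈ range n, (1 - u * v ^ k)

/-- Partitions of `m` into distinct parts, all at most `n`. -/
noncomputable def Dle (n m : ℕ) : Finset (Nat.Partition m) :=
  (Nat.Partition.distincts m).filter fun p => ∀ i ∈ p.parts, i ≤ n

/-- Partitions of `M` into exactly `n` distinct parts. -/
noncomputable def Dexact (n M : ℕ) : Finset (Nat.Partition M) :=
  (Nat.Partition.distincts M).filter fun p => p.parts.card = n

/-!
Split the summand as `(-aq;q)_n` times `bⁿ q^(n(n+1)/2) / (bq;q)_n`. Expanding the product,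
`(-aq;q)_n = ∑_{t ⊆ {1,…,n}} a^|t| q^(∑ t)` is the generating function of `D_{≤n}` by number of
parts. The generating function `G_n` of `D_n`, with `b` marking the largest part, satisfies
`G_{n+1} = b q^(n+1) (G_n + G_{n+1})`: subtracting 1 from every part of `π ∈ D_{n+1}` lowers the
largest part by one and leaves a partition in `D_n` or in `D_{n+1}`, according as `1` is a part
of `π` or not. Hence `(bq;q)_n G_n = bⁿ q^(n(n+1)/2)`, and the summand is the Cauchy product of
the two `q`-series.
-/

open MvPowerSeries

namespace MvPowerSeries.WithPiTopology

variable {σ R : Type*} [CommSemiring R] [TopologicalSpace R]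

theorem summable_mul_X_pow {ι : Type*} (i : σ) (c : ι → MvPowerSeries σ R) (e : ι → ℕ)
    (he : ∀ K, {j | e j ≤ K}.Finite) : Summable fun j => c j * X i ^ e j := by
  rw [summable_iff_summable_coeff]
  refine fun d => summable_of_hasFiniteSupport ((he (d i)).subset fun j hj => ?_)
  by_contra hlt
  refine hj ?_
  show coeff d (c j * X i ^ e j) = 0
  rw [X_pow_eq, coeff_mul_monomial, if_neg (by simpa [Finsupp.single_le_iff] using hlt)]

theorem summable_nat_mul_X_pow (i : σ) (c : ℕ → MvPowerSeries σ R) :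
    Summable fun n => c n * X i ^ n :=
  summable_mul_X_pow i c id Set.finite_Iic

theorem tsum_mul_X_pow_mul_tsum_mul_X_pow [T3Space R] [IsTopologicalSemiring R] (i : σ)
    (α β : ℕ → MvPowerSeries σ R) :
    (∑' m, α m * X i ^ m) * ∑' n, β n * X i ^ n =
      ∑' N, ∑ m ∈ range (N + 1), α m * β (N - m) * X i ^ N := by
  have : T3Space (MvPowerSeries σ R) := inferInstanceAs (T3Space ((σ →₀ ℕ) → R))
  have hprod : Summable fun x : ℕ × ℕ => α x.1 * X i ^ x.1 * (β x.2 * X i ^ x.2) := by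
    refine (summable_mul_X_pow i (fun x : ℕ × ℕ => α x.1 * β x.2) (fun x => x.1 + x.2)
      fun K => ((Set.finite_Iic K).prod (Set.finite_Iic K)).subset ?_).congr fun x => ?_
    · intro x hx
      simp only [Set.mem_ofPred_eq] at hx
      exact ⟨by simp; omega, by simp; omega⟩
    · ring
  rw [(summable_nat_mul_X_pow i α).tsum_mul_tsum_eq_tsum_sum_range
    (summable_nat_mul_X_pow i β) hprod]
  refine tsum_congr fun N => sum_congr rfl fun m hm => ?_
  rw [mul_mul_mul_comm, ← pow_add, Nat.add_sub_cancel' (mem_range_succ_iff.1 hm)]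

end MvPowerSeries.WithPiTopology

theorem Multiset.sum_map_add_one (s : Multiset ℕ) :
    (s.map (· + 1)).sum = s.sum + Multiset.card s := by
  simp [Multiset.sum_map_add]

theorem Multiset.map_add_one_map_sub_one {s : Multiset ℕ} (h : ∀ {i}, i ∈ s → 0 < i) :
    (s.map (· - 1)).map (· + 1) = s := by
  rw [Multiset.map_map]
  conv_rhs => rw [← Multiset.map_id s]
  exact Multiset.map_congr rfl fun x hx => Nat.sub_add_cancel (h hx)

theorem Multiset.sup_map_add_one {s : Multiset ℕ} (h : s ≠ 0) :
    (s.map (· + 1)).sup = s.sup + 1 := by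
  induction s using Multiset.induction with
  | empty => exact absurd rfl h
  | cons a s ih =>
    rcases eq_or_ne s 0 with rfl | hs
    · simp
    · simp only [Multiset.map_cons, Multiset.sup_cons, ih hs]
      exact Nat.succ_max_succ a s.sup

theorem Multiset.sup_cons_one_map_add_one (s : Multiset ℕ) :
    (1 ::ₘ s.map (· + 1)).sup = s.sup + 1 := by
  rcases eq_or_ne s 0 with rfl | hs
  · simp
  · rw [Multiset.sup_cons, Multiset.sup_map_add_one hs]
    exact max_eq_right (Nat.le_add_left 1 _)

section Partitions

variable {n m M : ℕ}

theorem mem_Dle {p : Nat.Partition m} : p ∈ Dle n m ↔ p.parts.Nodup ∧ ∀ i ∈ p.parts, i ≤ n := by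
  simp [Dle, Nat.Partition.distincts]

theorem mem_Dexact {p : Nat.Partition M} :
    p ∈ Dexact n M ↔ p.parts.Nodup ∧ Multiset.card p.parts = n := by
  simp [Dexact, Nat.Partition.distincts]

theorem Dexact_eq_empty_of_lt (h : M < n) : Dexact n M = ∅ := by
  refine eq_empty_of_forall_notMem fun p hp => h.not_ge ?_
  simpa [p.parts_sum, (mem_Dexact.1 hp).2] using
    Multiset.card_nsmul_le_sum fun x hx => p.parts_pos hx

theorem Dexact_zero_eq_empty (h : M ≠ 0) : Dexact 0 M = ∅ :=
  eq_empty_of_forall_notMem fun p hp => h <| by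
    rw [← p.parts_sum, Multiset.card_eq_zero.1 (mem_Dexact.1 hp).2, Multiset.sum_zero]

theorem Dexact_zero_zero : Dexact 0 0 = univ :=
  eq_univ_of_forall fun p => mem_Dexact.2 (by simp)

section Sums

variable {A : Type*} [AddCommMonoid A]

theorem sum_Dle (g : Multiset ℕ → A) :
    ∑ p ∈ Dle n m, g p.parts = ∑ t ∈ (Icc 1 n).powerset with ∑ i ∈ t, i = m, g t.val := by
  refine sum_bij' (fun p hp => ⟨p.parts, (mem_Dle.1 hp).1⟩)
    (fun t ht => ⟨t.val, fun {i} hi => ?_, ?_⟩) (fun p hp => ?_) (fun t ht => ?_)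
    (fun _ _ => rfl) (fun _ _ => rfl) (fun _ _ => rfl)
  · have := mem_Icc.1 (mem_powerset.1 (mem_filter.1 ht).1 hi)
    omega
  · exact (sum_val t).trans (mem_filter.1 ht).2
  · simp only [mem_filter, mem_powerset]
    refine ⟨fun i hi => mem_Icc.2 ⟨p.parts_pos hi, (mem_Dle.1 hp).2 i hi⟩,
      (sum_val _).symm.trans p.parts_sum⟩
  · exact mem_Dle.2 ⟨t.nodup, fun i hi => (mem_Icc.1 (mem_powerset.1 (mem_filter.1 ht).1 hi)).2⟩

theorem sum_Dexact_filter_one_mem (g : Multiset ℕ → A) :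
    ∑ p ∈ Dexact (n + 1) (M + 1) with 1 ∈ p.parts, g p.parts =
      ∑ p ∈ Dexact n M with 1 ∉ p.parts, g (1 ::ₘ p.parts) := by
  refine sum_bij'
    (fun p hp => ⟨p.parts.erase 1, fun hi => p.parts_pos (Multiset.mem_of_mem_erase hi), ?_⟩)
    (fun p _ => ⟨1 ::ₘ p.parts, ?_, by simp [p.parts_sum, add_comm]⟩)
    (fun p hp => ?_) (fun p hp => ?_) (fun p hp => ?_) (fun p _ => ?_) (fun p hp => ?_)
  · rw [← add_right_cancel_iff (a := 1), add_comm, Multiset.sum_erase (mem_filter.1 hp).2,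
      p.parts_sum]
  · rintro i hi
    rcases Multiset.mem_cons.1 hi with rfl | hi
    exacts [one_pos, p.parts_pos hi]
  · obtain ⟨hp, h1⟩ := mem_filter.1 hp
    obtain ⟨hnd, hcard⟩ := mem_Dexact.1 hp
    refine mem_filter.2 ⟨mem_Dexact.2 ⟨hnd.erase 1, ?_⟩, hnd.notMem_erase⟩
    simp [Multiset.card_erase_of_mem h1, hcard]
  · obtain ⟨hp, h1⟩ := mem_filter.1 hp
    obtain ⟨hnd, hcard⟩ := mem_Dexact.1 hp
    exact mem_filter.2 ⟨mem_Dexact.2 ⟨Multiset.nodup_cons.2 ⟨h1, hnd⟩, by simp [hcard]⟩,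
      Multiset.mem_cons_self 1 _⟩
  · exact Nat.Partition.ext (Multiset.cons_erase (mem_filter.1 hp).2)
  · exact Nat.Partition.ext (Multiset.erase_cons_head 1 p.parts)
  · rw [Multiset.cons_erase (mem_filter.1 hp).2]

theorem sum_Dexact_filter_one_notMem (g : Multiset ℕ → A) :
    ∑ p ∈ Dexact n (M + n) with 1 ∉ p.parts, g p.parts =
      ∑ p ∈ Dexact n M, g (p.parts.map (· + 1)) := by
  refine sum_bij'
    (fun p hp => ⟨p.parts.map (· - 1), ?_, ?_⟩)
    (fun p hp => ⟨p.parts.map (· + 1), ?_, ?_⟩)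
    (fun p hp => ?_) (fun p hp => ?_) (fun p hp => ?_) (fun p _ => ?_) (fun p hp => ?_)
  · intro i hi
    obtain ⟨j, hj, rfl⟩ := Multiset.mem_map.1 hi
    have := p.parts_pos hj
    have : j ≠ 1 := fun h => (mem_filter.1 hp).2 (h ▸ hj)
    omega
  · have h := Multiset.sum_map_add_one (p.parts.map (· - 1))
    rw [Multiset.map_add_one_map_sub_one p.parts_pos, p.parts_sum, Multiset.card_map,
      (mem_Dexact.1 (mem_filter.1 hp).1).2] at h
    omega
  · intro i hi
    obtain ⟨j, -, rfl⟩ := Multiset.mem_map.1 hi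
    exact j.succ_pos
  · rw [Multiset.sum_map_add_one, p.parts_sum, (mem_Dexact.1 hp).2]
  · obtain ⟨hnd, hcard⟩ := mem_Dexact.1 (mem_filter.1 hp).1
    refine mem_Dexact.2 ⟨hnd.map_on fun i hi j hj hij => ?_, by simp [hcard]⟩
    have := p.parts_pos hi
    have := p.parts_pos hj
    omega
  · obtain ⟨hnd, hcard⟩ := mem_Dexact.1 hp
    refine mem_filter.2 ⟨mem_Dexact.2 ⟨hnd.map (add_left_injective 1), by simp [hcard]⟩, ?_⟩
    simpa using fun h => (p.parts_pos h).false
  · exact Nat.Partition.ext (Multiset.map_add_one_map_sub_one p.parts_pos)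
  · exact Nat.Partition.ext (by simp [Multiset.map_map])
  · rw [Multiset.map_add_one_map_sub_one p.parts_pos]

end Sums

theorem sum_Dexact_succ {A : Type*} [CommSemiring A] (x : A) :
    ∑ p ∈ Dexact (n + 1) (M + (n + 1)), x ^ p.parts.sup =
      x * (∑ p ∈ Dexact n M, x ^ p.parts.sup + ∑ p ∈ Dexact (n + 1) M, x ^ p.parts.sup) := by
  have hmem : ∑ p ∈ Dexact (n + 1) (M + (n + 1)) with 1 ∈ p.parts, x ^ p.parts.sup =
      ∑ p ∈ Dexact n M, x ^ (p.parts.sup + 1) := by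
    rw [← add_assoc, sum_Dexact_filter_one_mem (fun s => x ^ s.sup),
      sum_Dexact_filter_one_notMem (fun s => x ^ (1 ::ₘ s).sup)]
    simp only [Multiset.sup_cons_one_map_add_one]
  have hnotMem : ∑ p ∈ Dexact (n + 1) (M + (n + 1)) with 1 ∉ p.parts, x ^ p.parts.sup =
      ∑ p ∈ Dexact (n + 1) M, x ^ (p.parts.sup + 1) := by
    rw [sum_Dexact_filter_one_notMem (fun s => x ^ s.sup)]
    refine sum_congr rfl fun p hp => ?_
    rw [Multiset.sup_map_add_one fun h => by simpa [h] using (mem_Dexact.1 hp).2]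
  rw [← sum_filter_add_sum_filter_not _ (fun p => 1 ∈ p.parts), hmem, hnotMem, mul_add,
    mul_sum, mul_sum]
  simp only [pow_succ']

end Partitions

theorem tsum_sum_filter_eq_sum {ι α : Type*} [AddCommMonoid α] [TopologicalSpace α]
    (s : Finset ι) (g : ι → ℕ) (f : ι → ℕ → α) :
    ∑' m, ∑ i ∈ s with g i = m, f i m = ∑ i ∈ s, f i (g i) := by
  classical
  rw [tsum_eq_sum (s := s.image g) fun m hm => sum_eq_zero fun i hi => ?_,
    ← sum_fiberwise_of_maps_to (fun i hi => mem_image_of_mem g hi)]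
  · exact sum_congr rfl fun m _ => sum_congr rfl fun i hi => by rw [(mem_filter.1 hi).2]
  · obtain ⟨his, rfl⟩ := mem_filter.1 hi
    exact absurd (mem_image_of_mem g his) hm

noncomputable instance : T3Space (MvPowerSeries (Fin 3) ℚ) :=
  inferInstanceAs (T3Space ((Fin 3 →₀ ℕ) → ℚ))

-- The topology of the statement is definitionally `MvPowerSeries.WithPiTopology`'s.
noncomputable instance : IsTopologicalRing (MvPowerSeries (Fin 3) ℚ) :=
  MvPowerSeries.WithPiTopology.instIsTopologicalRing (Fin 3) ℚ

theorem poch_neg_mul_q_eq_tsum (x : MvPowerSeries (Fin 3) ℚ) (n : ℕ) :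
    poch (-(x * q)) q n = ∑' m, (∑ p ∈ Dle n m, x ^ Multiset.card p.parts) * q ^ m := by
  calc poch (-(x * q)) q n = ∏ k ∈ Icc 1 n, (x * q ^ k + 1) := by
        rw [← Ico_add_one_right_eq_Icc, prod_Ico_eq_prod_range, Nat.add_sub_cancel, poch]
        exact prod_congr rfl fun k _ => by ring
    _ = ∑ t ∈ (Icc 1 n).powerset, x ^ t.card * q ^ ∑ i ∈ t, i := by
        rw [prod_add]
        refine sum_congr rfl fun t _ => ?_
        rw [prod_const_one, mul_one, prod_mul_distrib, prod_const, prod_pow_eq_pow_sum]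
    _ = ∑' m, ∑ t ∈ (Icc 1 n).powerset with ∑ i ∈ t, i = m, x ^ t.card * q ^ m :=
        (tsum_sum_filter_eq_sum _ (fun t => ∑ i ∈ t, i) fun t m => x ^ t.card * q ^ m).symm
    _ = _ := tsum_congr fun m => by
        rw [sum_Dle (fun s => x ^ Multiset.card s), sum_mul]
        rfl

theorem constantCoeff_poch {u : MvPowerSeries (Fin 3) ℚ} (hu : constantCoeff u = 0)
    (v : MvPowerSeries (Fin 3) ℚ) (n : ℕ) : constantCoeff (poch u v n) = 1 := by
  simp [poch, map_prod, hu]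

noncomputable def genFunDexact (n : ℕ) : MvPowerSeries (Fin 3) ℚ :=
  ∑' M, (∑ p ∈ Dexact n M, b ^ p.parts.sup) * q ^ M

theorem summable_genFunDexact (n : ℕ) :
    Summable fun M => (∑ p ∈ Dexact n M, b ^ p.parts.sup) * q ^ M :=
  WithPiTopology.summable_nat_mul_X_pow 2 _

theorem genFunDexact_zero : genFunDexact 0 = 1 := by
  rw [genFunDexact, tsum_eq_single 0 fun M hM => by
    rw [Dexact_zero_eq_empty hM, sum_empty, zero_mul], Dexact_zero_zero]
  simp

theorem genFunDexact_succ (n : ℕ) :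
    genFunDexact (n + 1) = b * q ^ (n + 1) * (genFunDexact n + genFunDexact (n + 1)) := by
  have hlow : ∑ M ∈ range (n + 1), (∑ p ∈ Dexact (n + 1) M, b ^ p.parts.sup) * q ^ M = 0 :=
    sum_eq_zero fun M hM => by
      rw [Dexact_eq_empty_of_lt (mem_range.1 hM), sum_empty, zero_mul]
  have hsum := (summable_genFunDexact n).add (summable_genFunDexact (n + 1))
  calc genFunDexact (n + 1)
      = ∑' M, (∑ p ∈ Dexact (n + 1) (M + (n + 1)), b ^ p.parts.sup) * q ^ (M + (n + 1)) := by
        rw [genFunDexact, ← (summable_genFunDexact (n + 1)).sum_add_tsum_nat_add (n + 1), hlow,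
          zero_add]
    _ = ∑' M, b * q ^ (n + 1) * ((∑ p ∈ Dexact n M, b ^ p.parts.sup) * q ^ M +
          (∑ p ∈ Dexact (n + 1) M, b ^ p.parts.sup) * q ^ M) :=
        tsum_congr fun M => by rw [sum_Dexact_succ]; ring
    _ = _ := by rw [hsum.tsum_mul_left, (summable_genFunDexact n).tsum_add
          (summable_genFunDexact (n + 1))]; rfl

theorem poch_mul_genFunDexact (n : ℕ) :
    poch (b * q) q n * genFunDexact n = b ^ n * q ^ (n * (n + 1) / 2) := by
  induction n with
  | zero => simp [poch, genFunDexact_zero]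
  | succ n ih =>
    have htri : (n + 1) * (n + 1 + 1) / 2 = n * (n + 1) / 2 + (n + 1) := by
      rw [show (n + 1) * (n + 1 + 1) = n * (n + 1) + (n + 1) * 2 by ring,
        Nat.add_mul_div_right _ _ two_pos]
    rw [poch, prod_range_succ, ← poch, htri]
    linear_combination poch (b * q) q n * genFunDexact_succ n + b * q ^ (n + 1) * ih

theorem genFunDexact_eq (n : ℕ) :
    genFunDexact n = b ^ n * q ^ (n * (n + 1) / 2) * (poch (b * q) q n)⁻¹ := by
  refine (MvPowerSeries.eq_mul_inv_iff_mul_eq ?_).2 ?_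
  · rw [constantCoeff_poch (by simp [b, q])]
    exact one_ne_zero
  · rw [mul_comm, poch_mul_genFunDexact]

theorem summand_eq_tsum (n : ℕ) :
    poch (-(a * q)) q n * b ^ n * q ^ (n * (n + 1) / 2) * (poch (b * q) q n)⁻¹ =
      ∑' N : ℕ, ∑ m ∈ range (N + 1), ∑ p1 ∈ Dle n m, ∑ p2 ∈ Dexact n (N - m),
        a ^ Multiset.card p1.parts * b ^ p2.parts.sup * q ^ N := by
  calc _ = poch (-(a * q)) q n * genFunDexact n := by rw [genFunDexact_eq]; ring
    _ = ∑' N, ∑ m ∈ range (N + 1), (∑ p ∈ Dle n m, a ^ Multiset.card p.parts) *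
          (∑ p ∈ Dexact n (N - m), b ^ p.parts.sup) * q ^ N := by
      rw [poch_neg_mul_q_eq_tsum, genFunDexact]
      exact WithPiTopology.tsum_mul_X_pow_mul_tsum_mul_X_pow 2 _ _
    _ = _ := tsum_congr fun N => sum_congr rfl fun m _ => by
      rw [sum_mul_sum, sum_mul]
      exact sum_congr rfl fun _ _ => sum_mul _ _ _

/-- the combinatorial interpretation (2.23): `a` tracks the number of parts
of `π₁ ∈ D_{≤n}` and `b` tracks the largest part of `π₂ ∈ D_n`. -/
theorem combinatorial_interpretation :
    ∑' n : ℕ, poch (-(a * q)) q n * b ^ n * q ^ (n * (n + 1) / 2) * (poch (b * q) q n)⁻¹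
      = ∑' n : ℕ, ∑' N : ℕ, ∑ m ∈ range (N + 1), ∑ p1 ∈ Dle n m,
          ∑ p2 ∈ Dexact n (N - m), a ^ p1.parts.card * b ^ p2.parts.sup * q ^ N :=
  tsum_congr summand_eq_tsum
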